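/- Let w be a pp-irreducible string, b ≤ c positions of w, and f = max{ 𝓕_w(d) : b ≤ d ≤ c }. Then f = max{ 𝓕_w(d) : b ≤ d ≤ f }. -/

import Mathlib

/-!
Common definitions: strings as `List α` over an alphabet `α`, 1-based positions.
-/

variable {α : Type*}

/-- The substring `w[i:j]` (1-based, inclusive; empty when `j < i`). -/
def seg (w : List α) (i j : ℕ) : List α := (w.take j).drop (i - 1)

/-- `w` has an even palindrome of radius `r` centered at position `c`:
`r ≤ c`, `c + r ≤ |w|` and `w[c−k+1] = w[c+k]` for all `1 ≤ k ≤ r`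
(here expressed with 0-based list indexing: `w[c−k]? = w[c+k−1]?`). -/
def PalAt (w : List α) (c r : ℕ) : Prop :=
  r ≤ c ∧ c + r ≤ w.length ∧ ∀ k, 1 ≤ k → k ≤ r → w[c - k]? = w[c + k - 1]?

/-- `ρ_w(c)`: the maximal even-palindrome radius at center `c`. -/
noncomputable def rho (w : List α) (c : ℕ) : ℕ := sSup {r | PalAt w c r}

/-- The reduction relation: `x y yᴿ y z → x y z` for nonempty `y`. -/
def Reduces (w w' : List α) : Prop :=
  ∃ x y z : List α, y ≠ [] ∧ w = x ++ y ++ y.reverse ++ y ++ z ∧ w' = x ++ y ++ z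

/-- A string is irreducible if no reduction applies to it. -/
def ZIrreducible (w : List α) : Prop := ∀ w', ¬ Reduces w w'

def ZReducible (w : List α) : Prop := ∃ w', Reduces w w'

/-- `w` is pp-irreducible if its longest proper prefix `w[1:|w|−1]` is irreducible. -/
def PPIrreducible (w : List α) : Prop := ZIrreducible w.dropLast

/-- `w` is ss-reducible if it is reducible and pp-irreducible. -/
def SSReducible (w : List α) : Prop := ZReducible w ∧ PPIrreducible w

/-- A Z-shape occurrence `⟨p1, p2⟩` in `w`: with `s = p2 − p1 ≥ 1`, `p1 − s ≥ 0`,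
`p2 + s ≤ |w|` and `w[p1−s+1 : p2+s] = x xᴿ x` where `x = w[p1−s+1 : p1]`. -/
def ZOcc (w : List α) (p1 p2 : ℕ) : Prop :=
  p1 < p2 ∧ p2 - p1 ≤ p1 ∧ p2 + (p2 - p1) ≤ w.length ∧
    seg w (p1 - (p2 - p1) + 1) (p2 + (p2 - p1)) =
      seg w (p1 - (p2 - p1) + 1) p1 ++ (seg w (p1 - (p2 - p1) + 1) p1).reverse ++
        seg w (p1 - (p2 - p1) + 1) p1

/-- `c ⊏_w d` : `c ≤ d − ρ_w(d) ≤ d ≤ c + ρ_w(c) ≤ d + ρ_w(d)` with `c ≠ d`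
(written without truncated subtraction). -/
def Sqsub (w : List α) (c d : ℕ) : Prop :=
  c < d ∧ c + rho w d ≤ d ∧ d ≤ c + rho w c ∧ c + rho w c ≤ d + rho w d

/-- `𝓕_w(c)`: the maximum frontier over all palindrome chains from `c`
(a palindrome chain is a nonempty list starting at `c` whose consecutive
elements are related by `⊏_w`; its frontier is `e + ρ_w(e)` for its last element `e`). -/
noncomputable def maxFrontier (w : List α) (c : ℕ) : ℕ :=
  sSup {f | ∃ l : List ℕ, l.head? = some c ∧ l.Chain' (Sqsub w) ∧
      ∃ e, l.getLast? = some e ∧ f = e + rho w e}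

/-- `𝓐_w(d)`: the smallest position `c` with `c ≤ d ≤ 𝓕_w(c)`. -/
noncomputable def originator (w : List α) (d : ℕ) : ℕ :=
  sInf {c | 1 ≤ c ∧ c ≤ d ∧ d ≤ maxFrontier w c}

/-- A position `c` of a pp-irreducible string `w` is stable if `𝓕_w(c) < |w|`. -/
def Stable (w : List α) (c : ℕ) : Prop := maxFrontier w c < w.length

/-- `c` is strongly stable if every position in `[1:c]` is stable. -/
def StronglyStable (w : List α) (c : ℕ) : Prop := ∀ e, 1 ≤ e → e ≤ c → Stable w e

/-- `T` is the output of an end-to-end walk on the path graph labeled `u`: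
there are vertices `p 0 = 0, …, p |T| = |u|`, each `≤ |u|`, consecutive ones
adjacent, and `T[i] = u[max (p (i−1)) (p i)]` (1-based; here 0-based indexing). -/
def EndToEndWalkOutput (u T : List α) : Prop :=
  ∃ p : ℕ → ℕ, p 0 = 0 ∧ p T.length = u.length ∧
    (∀ i, i ≤ T.length → p i ≤ u.length) ∧
    (∀ i, i < T.length → p (i + 1) = p i + 1 ∨ p i = p (i + 1) + 1) ∧
    (∀ i, i < T.length → T[i]? = u[max (p i) (p (i + 1)) - 1]?)

/-- `P` is accurate enough between `a` and `b`:
`min (P e) (b − e) = min (ρ_w e) (b − e)` for all `e ∈ [a:b]`. -/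
def AccEnough (w : List α) (P : ℕ → ℕ) (a b : ℕ) : Prop :=
  ∀ e, a ≤ e → e ≤ b → min (P e) (b - e) = min (rho w e) (b - e)

open Classical in
/-- `ν_w(c)`: the largest `e` with `e ⊏_w c`, or `1` if there is none. -/
noncomputable def nu (w : List α) (c : ℕ) : ℕ :=
  if ∃ e, Sqsub w e c then sSup {e | Sqsub w e c} else 1

/-- `c` is left-good w.r.t. `P` if `P` is accurate enough between `ν_w(c)` and `c`. -/
def LeftGood (w : List α) (P : ℕ → ℕ) (c : ℕ) : Prop := AccEnough w P (nu w c) c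

/-- `c` is right-good w.r.t. `P` if `P` is accurate enough between `c` and `c + ρ_w(c)`. -/
def RightGood (w : List α) (P : ℕ → ℕ) (c : ℕ) : Prop := AccEnough w P c (c + rho w c)

/-!
If `e < d ≤ 𝓕_w(e)`, then `d + ρ_w(d) ≤ 𝓕_w(e)`: some element `g'` of a chain realising
`𝓕_w(e)` has `g' < d ≤ g' + ρ_w(g')`; either `g' ⊏_w d`, so the chain extends to `d`, or the
palindromes at `g'` and `d` overlap so much that `w` minus its last letter contains
`y yᴿ y` with `|y| = d − g'`. Hence every chain from `d` stays inside `(e, 𝓕_w(e)]`, so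
`𝓕_w(d) ≤ 𝓕_w(e)`. Applied to a maximiser `e` of `𝓕_w` on `[b, c]`, this bounds `𝓕_w` on
`(c, f]` by `f`.
-/

open Relation

section Palindrome

variable {w : List α} {c g r s : ℕ}

lemma PalAt.mono (h : PalAt w c r) (hs : s ≤ r) : PalAt w c s :=
  ⟨hs.trans h.1, by have := h.2.1; omega, fun k hk hks => h.2.2 k hk (hks.trans hs)⟩

lemma palAt_rho (hc : c ≤ w.length) : PalAt w c (rho w c) :=
  Nat.sSup_mem (s := {r | PalAt w c r}) ⟨0, Nat.zero_le c, by omega, fun _ _ _ => by omega⟩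
    ⟨c, fun _ hr => hr.1⟩

lemma add_rho_le_length (hc : c ≤ w.length) : c + rho w c ≤ w.length :=
  (palAt_rho hc).2.1

lemma PalAt.reverse_take_drop (h : PalAt w c r) :
    ((w.drop (c - r)).take r).reverse = (w.drop c).take r := by
  obtain ⟨hrc, hcr, hpal⟩ := h
  apply List.ext_getElem?
  intro n
  by_cases hn : n < r
  · rw [List.getElem?_reverse (by simp; omega), List.getElem?_take, List.getElem?_take,
      if_pos hn, List.getElem?_drop, List.getElem?_drop, List.length_take, List.length_drop,
      if_pos (by omega)]
    convert hpal (n + 1) (by omega) (by omega) using 2 <;> omega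
  · rw [List.getElem?_eq_none (by simp; omega), List.getElem?_eq_none (by simp; omega)]

lemma exists_eq_append_of_palAt_palAt (h₁ : PalAt w g s) (h₂ : PalAt w (g + s) s) :
    ∃ x y, y.length = s ∧ w = x ++ y ++ y.reverse ++ y ++ w.drop (g + 2 * s) := by
  set y := (w.drop (g - s)).take s
  have hyr : y.reverse = (w.drop g).take s := h₁.reverse_take_drop
  have hy : (w.drop (g + s)).take s = y := by
    rw [← List.reverse_reverse y, hyr, ← h₂.reverse_take_drop, Nat.add_sub_cancel]
  have split (i : ℕ) : w.drop i = (w.drop i).take s ++ w.drop (i + s) := by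
    rw [← List.drop_drop, List.take_append_drop]
  refine ⟨w.take (g - s), y, by have := h₂.2.1; simp [y]; omega, ?_⟩
  have hg : g - s + s = g := Nat.sub_add_cancel h₁.1
  calc w = w.take (g - s) ++ w.drop (g - s) := (List.take_append_drop _ _).symm
    _ = _ := by
      rw [split, hg, split g, split (g + s), hyr, hy, two_mul, ← add_assoc]
      simp only [List.append_assoc]
      rfl

lemma zReducible_dropLast {x y z : List α} (hy : y ≠ []) (hz : z ≠ []) :
    ZReducible (x ++ y ++ y.reverse ++ y ++ z).dropLast :=
  ⟨_, x, y, z.dropLast, hy, List.dropLast_append_of_ne_nil hz, rfl⟩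

lemma PPIrreducible.not_palAt_palAt (hpp : PPIrreducible w) (hs : 0 < s)
    (h₁ : PalAt w g s) (h₂ : PalAt w (g + s) s) (hlt : g + 2 * s < w.length) : False := by
  obtain ⟨x, y, hy, hw⟩ := exists_eq_append_of_palAt_palAt h₁ h₂
  have hy : y ≠ [] := List.ne_nil_of_length_pos (hy ▸ hs)
  have hz : w.drop (g + 2 * s) ≠ [] := by simpa using hlt
  obtain ⟨w', hw'⟩ := zReducible_dropLast (x := x) hy hz
  rw [← hw] at hw'
  exact hpp w' hw'

end Palindrome

lemma exists_chain_iff_reflTransGen {β : Type*} {R : β → β → Prop} {a b : β} :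
    (∃ l : List β, l.head? = some a ∧ l.IsChain R ∧ l.getLast? = some b) ↔
      ReflTransGen R a b := by
  constructor
  · rintro ⟨_ | ⟨a', l⟩, ha, hl, hb⟩
    · simp at ha
    · obtain rfl : a' = a := by simpa using ha
      exact List.relationReflTransGen_of_exists_isChain_cons l hl
        (by simpa [List.getLast?_eq_some_getLast] using hb)
  · intro h
    obtain ⟨l, hl, hb⟩ := List.exists_isChain_cons_of_relationReflTransGen h
    exact ⟨a :: l, rfl, hl, by rw [List.getLast?_eq_some_getLast (List.cons_ne_nil a l), hb]⟩

section Frontier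

variable {w : List α} {c d g : ℕ}

def chainFrontiers (w : List α) (c : ℕ) : Set ℕ :=
  {f | ∃ g, ReflTransGen (Sqsub w) c g ∧ f = g + rho w g}

lemma maxFrontier_eq_sSup (w : List α) (c : ℕ) : maxFrontier w c = sSup (chainFrontiers w c) := by
  simp only [maxFrontier, chainFrontiers, ← exists_chain_iff_reflTransGen]
  congr 1
  ext f
  constructor
  · rintro ⟨l, ha, hl, g, hg, rfl⟩
    exact ⟨g, ⟨l, ha, hl, hg⟩, rfl⟩
  · rintro ⟨g, ⟨l, ha, hl, hg⟩, rfl⟩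
    exact ⟨l, ha, hl, g, hg, rfl⟩

lemma le_length_of_reflTransGen (hc : c ≤ w.length) (h : ReflTransGen (Sqsub w) c g) :
    g ≤ w.length := by
  induction h with
  | refl => exact hc
  | tail _ hgd ih => exact hgd.2.2.1.trans (add_rho_le_length ih)

lemma bddAbove_chainFrontiers (hc : c ≤ w.length) : BddAbove (chainFrontiers w c) := by
  refine ⟨w.length, ?_⟩
  rintro _ ⟨g, hg, rfl⟩
  exact add_rho_le_length (le_length_of_reflTransGen hc hg)

lemma le_maxFrontier (hc : c ≤ w.length) (h : ReflTransGen (Sqsub w) c g) :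
    g + rho w g ≤ maxFrontier w c :=
  maxFrontier_eq_sSup w c ▸ le_csSup (bddAbove_chainFrontiers hc) ⟨g, h, rfl⟩

lemma exists_reflTransGen_maxFrontier_eq (hc : c ≤ w.length) :
    ∃ g, ReflTransGen (Sqsub w) c g ∧ maxFrontier w c = g + rho w g := by
  obtain ⟨g, hcg, hg⟩ := Nat.sSup_mem (s := chainFrontiers w c) ⟨c + rho w c, c, .refl, rfl⟩
    (bddAbove_chainFrontiers hc)
  exact ⟨g, hcg, (maxFrontier_eq_sSup w c).trans hg⟩

lemma exists_reflTransGen_lt_le_add_rho (h : ReflTransGen (Sqsub w) c g) (hcd : c < d)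
    (hd : d ≤ g + rho w g) :
    ∃ g', ReflTransGen (Sqsub w) c g' ∧ g' < d ∧ d ≤ g' + rho w g' := by
  induction h with
  | refl => exact ⟨c, .refl, hcd, hd⟩
  | @tail g h hcg hgh ih =>
    by_cases hhd : h < d
    · exact ⟨h, hcg.tail hgh, hhd, hd⟩
    · exact ih (by have := hgh.2.2.1; omega)

variable (hpp : PPIrreducible w) (hc : c ≤ w.length)
include hpp hc

lemma add_rho_le_maxFrontier (hcd : c < d) (hd : d ≤ maxFrontier w c) :
    d + rho w d ≤ maxFrontier w c := by
  obtain ⟨g, hcg, hg⟩ := exists_reflTransGen_maxFrontier_eq hc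
  obtain ⟨g', hcg', hg'd, hdg'⟩ := exists_reflTransGen_lt_le_add_rho hcg hcd (hg ▸ hd)
  have hg'c := le_maxFrontier hc hcg'
  by_contra! hlt
  by_cases hsq : g' + rho w d ≤ d
  · exact hlt.not_ge (le_maxFrontier hc (hcg'.tail ⟨hg'd, hsq, hdg', by omega⟩))
  · have hg'w := add_rho_le_length (le_length_of_reflTransGen hc hcg')
    have hdw := add_rho_le_length (hdg'.trans hg'w)
    have hpd := palAt_rho (w := w) (c := d) (by omega)
    have hpg' := palAt_rho (w := w) (c := g') (by omega)
    refine hpp.not_palAt_palAt (s := d - g') (by omega) (hpg'.mono (by omega)) ?_ (by omega)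
    exact (Nat.add_sub_cancel' hg'd.le).symm ▸ hpd.mono (by omega)

lemma mem_Ioc_maxFrontier_of_reflTransGen (hcd : c < d) (hd : d ≤ maxFrontier w c)
    (h : ReflTransGen (Sqsub w) d g) : g ∈ Set.Ioc c (maxFrontier w c) := by
  induction h with
  | refl => exact ⟨hcd, hd⟩
  | tail _ hgh ih =>
    exact ⟨ih.1.trans hgh.1,
      hgh.2.2.1.trans (add_rho_le_maxFrontier hpp hc ih.1 ih.2)⟩

lemma maxFrontier_le_of_lt_of_le (hcd : c < d) (hd : d ≤ maxFrontier w c) :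
    maxFrontier w d ≤ maxFrontier w c := by
  rw [maxFrontier_eq_sSup w d]
  refine csSup_le ⟨_, d, .refl, rfl⟩ ?_
  rintro _ ⟨g, hdg, rfl⟩
  have ⟨hcg, hg⟩ := mem_Ioc_maxFrontier_of_reflTransGen hpp hc hcd hd hdg
  exact add_rho_le_maxFrontier hpp hc hcg hg

end Frontier

theorem maxFrontier_sup_extend_general (w : List α) (hpp : PPIrreducible w) (b c : ℕ)
    (hbc : b ≤ c) (hc : c ≤ w.length) :
    (Finset.Icc b c).sup (maxFrontier w) =
      (Finset.Icc b ((Finset.Icc b c).sup (maxFrontier w))).sup (maxFrontier w) := by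
  obtain ⟨e, he, hfe⟩ := Finset.exists_mem_eq_sup _ (Finset.nonempty_Icc.2 hbc) (maxFrontier w)
  rw [Finset.mem_Icc] at he
  have hcf : c ≤ maxFrontier w e :=
    calc c ≤ c + rho w c := Nat.le_add_right _ _
      _ ≤ maxFrontier w c := le_maxFrontier hc .refl
      _ ≤ maxFrontier w e := hfe ▸ Finset.le_sup (Finset.right_mem_Icc.2 hbc)
  rw [hfe]
  refine le_antisymm (Finset.le_sup_of_le (Finset.mem_Icc.2 ⟨he.1, he.2.trans hcf⟩) le_rfl)
    (Finset.sup_le fun d hd => ?_)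
  rw [Finset.mem_Icc] at hd
  rcases le_or_gt d c with hdc | hcd
  · exact hfe ▸ Finset.le_sup (Finset.mem_Icc.2 ⟨hd.1, hdc⟩)
  · exact maxFrontier_le_of_lt_of_le hpp (he.2.trans hc) (he.2.trans_lt hcd) hd.2

/-- for positions `b ≤ c` of a pp-irreducible string and
`f = max{𝓕_w(d) : b ≤ d ≤ c}`, one has `f = max{𝓕_w(d) : b ≤ d ≤ f}`. -/
theorem maxFrontier_sup_extend (w : List α) (hpp : PPIrreducible w) (b c : ℕ)
    (hb : 1 ≤ b) (hbc : b ≤ c) (hc : c ≤ w.length) :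
    (Finset.Icc b c).sup (maxFrontier w) =
      (Finset.Icc b ((Finset.Icc b c).sup (maxFrontier w))).sup (maxFrontier w) :=
  maxFrontier_sup_extend_general w hpp b c hbc hc
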